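/- arXiv:2503.14165 — 6 statements merged into one kernel-verified Lean document; each statement's English description precedes it below -/
import Mathlib

section
/- Let (A0, A1, d, ·) be a strict associative 2-algebra and let R0 : A0 → A0, R1 : A1 → A1 be linear maps with R0∘d = d∘R1 such that for all x,y ∈ A0, a ∈ A1: R0(R0(x)·y + x·R0(y) − x·y) = R0(x)·R0(y); R1(R0(x)·a + x·R1(a) − x·a) = R0(x)·R1(a); R1(R1(a)·x + a·R0(x) − a·x) = R1(a)·R0(x) (i.e. (R0,R1) is a Rota–Baxter operator of weight 1). Define new multiplications by x∘y = R0(x)·y − y·R0(x) − x·y, x∘a = R0(x)·a − a·R0(x) − x·a, a∘x = R1(a)·x − x·R1(a) − a·x. Then (A0, A1, d, ∘) is a strict pre-Lie 2-algebra. -/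
namespace PreLie2

open Module TensorProduct

variable (K : Type*) [Field K]

/-- A two-argument map between modules is bilinear. -/
def IsBilin {M N P : Type*} [AddCommGroup M] [Module K M] [AddCommGroup N] [Module K N]
    [AddCommGroup P] [Module K P] (f : M → N → P) : Prop :=
  (∀ m, IsLinearMap K (f m)) ∧ ∀ n, IsLinearMap K fun m => f m n

section TwoTerm

variable {A0 A1 : Type*} [AddCommGroup A0] [Module K A0] [AddCommGroup A1] [Module K A1]

/-- A strict pre-Lie `2`-algebra structure on the two-term complex `d : A1 → A0`. -/
structure IsStrictPreLie2 (d : A1 → A0) (m00 : A0 → A0 → A0)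
    (m01 : A0 → A1 → A1) (m10 : A1 → A0 → A1) : Prop where
  d_lin : IsLinearMap K d
  m00_bilin : IsBilin K m00
  m01_bilin : IsBilin K m01
  m10_bilin : IsBilin K m10
  d_m01 : ∀ x a, d (m01 x a) = m00 x (d a)
  d_m10 : ∀ a x, d (m10 a x) = m00 (d a) x
  d_mix : ∀ a b, m01 (d a) b = m10 a (d b)
  preLie0 : ∀ x y z, m00 x (m00 y z) - m00 (m00 x y) z = m00 y (m00 x z) - m00 (m00 y x) z
  preLie1 : ∀ x y a, m01 x (m01 y a) - m01 (m00 x y) a = m01 y (m01 x a) - m01 (m00 y x) a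
  preLie2 : ∀ a x y, m10 a (m00 x y) - m10 (m10 a x) y = m01 x (m10 a y) - m10 (m01 x a) y

/-- A strict Lie `2`-algebra structure on the two-term complex `δ : A1 → A0`. -/
structure IsStrictLie2 (δ : A1 → A0) (br0 : A0 → A0 → A0) (br1 : A0 → A1 → A1) : Prop where
  δ_lin : IsLinearMap K δ
  br0_bilin : IsBilin K br0
  br1_bilin : IsBilin K br1
  skew : ∀ x y, br0 x y = -br0 y x
  δ_br1 : ∀ x a, δ (br1 x a) = br0 x (δ a)
  br1_δ : ∀ a b, br1 (δ a) b = -br1 (δ b) a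
  jacobi0 : ∀ x y z, br0 (br0 x y) z + br0 (br0 y z) x + br0 (br0 z x) y = 0
  jacobi1 : ∀ x y b, br1 x (br1 y b) - br1 y (br1 x b) - br1 (br0 x y) b = 0

/-- A strict associative `2`-algebra structure on the two-term complex `d : A1 → A0`. -/
structure IsStrictAssoc2 (d : A1 → A0) (m00 : A0 → A0 → A0)
    (m01 : A0 → A1 → A1) (m10 : A1 → A0 → A1) : Prop where
  d_lin : IsLinearMap K d
  m00_bilin : IsBilin K m00
  m01_bilin : IsBilin K m01
  m10_bilin : IsBilin K m10
  d_m01 : ∀ x a, d (m01 x a) = m00 x (d a)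
  d_m10 : ∀ a x, d (m10 a x) = m00 (d a) x
  d_mix : ∀ a b, m01 (d a) b = m10 a (d b)
  assoc000 : ∀ x y z, m00 x (m00 y z) = m00 (m00 x y) z
  assoc001 : ∀ x y a, m01 x (m01 y a) = m01 (m00 x y) a
  assoc010 : ∀ x a y, m01 x (m10 a y) = m10 (m01 x a) y
  assoc100 : ∀ a x y, m10 a (m00 x y) = m10 (m10 a x) y

end TwoTerm

/-- A pre-Lie algebra structure. -/
structure IsPreLie {B : Type*} [AddCommGroup B] [Module K B] (mul : B → B → B) : Prop where
  bilin : IsBilin K mul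
  preLie : ∀ x y z, mul (mul x y) z - mul x (mul y z) = mul (mul y x) z - mul y (mul x z)

section Rep

variable {g0 g1 V0 V1 : Type*}
  [AddCommGroup g0] [Module K g0] [AddCommGroup g1] [Module K g1]
  [AddCommGroup V0] [Module K V0] [AddCommGroup V1] [Module K V1]

/-- A strict representation of a strict Lie 2-algebra `(g0, g1, δ, br0, br1)` on the
two-term complex `par : V1 → V0`. -/
structure IsStrictRepLie2 (δ : g1 → g0) (br0 : g0 → g0 → g0) (br1 : g0 → g1 → g1)
    (par : V1 → V0) (ρ00 : g0 → V0 → V0) (ρ01 : g0 → V1 → V1) (ρ1 : g1 → V0 → V1) : Prop where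
  ρ00_bilin : IsBilin K ρ00
  ρ01_bilin : IsBilin K ρ01
  ρ1_bilin : IsBilin K ρ1
  chain : ∀ x m, ρ00 x (par m) = par (ρ01 x m)
  comp0 : ∀ a v, ρ00 (δ a) v = par (ρ1 a v)
  comp1 : ∀ a m, ρ01 (δ a) m = ρ1 a (par m)
  rep00 : ∀ x y v, ρ00 (br0 x y) v = ρ00 x (ρ00 y v) - ρ00 y (ρ00 x v)
  rep01 : ∀ x y m, ρ01 (br0 x y) m = ρ01 x (ρ01 y m) - ρ01 y (ρ01 x m)
  rep1 : ∀ x a v, ρ1 (br1 x a) v = ρ01 x (ρ1 a v) - ρ1 a (ρ00 x v)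

/-- A strict representation of a strict pre-Lie 2-algebra `(g0, g1, d, m00, m01, m10)` on the
two-term complex `par : V1 → V0`. -/
structure IsStrictRepPreLie2 (d : g1 → g0) (m00 : g0 → g0 → g0) (m01 : g0 → g1 → g1)
    (m10 : g1 → g0 → g1) (par : V1 → V0)
    (ρ00 : g0 → V0 → V0) (ρ01 : g0 → V1 → V1) (ρ1 : g1 → V0 → V1)
    (μ00 : g0 → V0 → V0) (μ01 : g0 → V1 → V1) (μ1 : g1 → V0 → V1) : Prop where
  toRepLie : IsStrictRepLie2 K d (fun x y => m00 x y - m00 y x)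
    (fun x a => m01 x a - m10 a x) par ρ00 ρ01 ρ1
  μ00_bilin : IsBilin K μ00
  μ01_bilin : IsBilin K μ01
  μ1_bilin : IsBilin K μ1
  μchain : ∀ x m, μ00 x (par m) = par (μ01 x m)
  μcomp0 : ∀ a v, μ00 (d a) v = par (μ1 a v)
  μcomp1 : ∀ a m, μ01 (d a) m = μ1 a (par m)
  eqA0 : ∀ x y v, μ00 (m00 x y) v + μ00 y (ρ00 x v) - ρ00 x (μ00 y v) - μ00 y (μ00 x v) = 0
  eqA1 : ∀ x y m, μ01 (m00 x y) m + μ01 y (ρ01 x m) - ρ01 x (μ01 y m) - μ01 y (μ01 x m) = 0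
  eqB : ∀ x a v, μ1 (m01 x a) v - ρ01 x (μ1 a v) + μ1 a (ρ00 x v) - μ1 a (μ00 x v) = 0
  eqC : ∀ a x v, μ1 (m10 a x) v - ρ1 a (μ00 x v) + μ01 x (ρ1 a v) - μ01 x (μ1 a v) = 0

/-- An `O`-operator on a strict Lie 2-algebra associated to a strict representation. -/
structure IsOOperator (δ : g1 → g0) (br0 : g0 → g0 → g0) (br1 : g0 → g1 → g1)
    (par : V1 → V0) (ρ00 : g0 → V0 → V0) (ρ01 : g0 → V1 → V1) (ρ1 : g1 → V0 → V1)
    (T0 : V0 → g0) (T1 : V1 → g1) : Prop where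
  T0_lin : IsLinearMap K T0
  T1_lin : IsLinearMap K T1
  chain : ∀ m, T0 (par m) = δ (T1 m)
  eq0 : ∀ u v, T0 (ρ00 (T0 u) v - ρ00 (T0 v) u) = br0 (T0 u) (T0 v)
  eq1 : ∀ m v, T1 (ρ1 (T1 m) v - ρ01 (T0 v) m) = -br1 (T0 v) (T1 m)

end Rep

section Matched

variable {g0 g1 h0 h1 : Type*}
  [AddCommGroup g0] [Module K g0] [AddCommGroup g1] [Module K g1]
  [AddCommGroup h0] [Module K h0] [AddCommGroup h1] [Module K h1]

/-- A matched pair of strict Lie 2-algebras. -/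
structure IsMatchedPairLie2
    (δ : g1 → g0) (br0 : g0 → g0 → g0) (br1 : g0 → g1 → g1)
    (δ' : h1 → h0) (br0' : h0 → h0 → h0) (br1' : h0 → h1 → h1)
    (ν00 : g0 → h0 → h0) (ν01 : g0 → h1 → h1) (ν1 : g1 → h0 → h1)
    (ν00' : h0 → g0 → g0) (ν01' : h0 → g1 → g1) (ν1' : h1 → g0 → g1) : Prop where
  lie : IsStrictLie2 K δ br0 br1
  lie' : IsStrictLie2 K δ' br0' br1'
  rep : IsStrictRepLie2 K δ br0 br1 δ' ν00 ν01 ν1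
  rep' : IsStrictRepLie2 K δ' br0' br1' δ ν00' ν01' ν1'
  eqL1 : ∀ x' x y, ν00' x' (br0 x y) =
      br0 x (ν00' x' y) + br0 (ν00' x' x) y + ν00' (ν00 y x') x - ν00' (ν00 x x') y
  eqL2 : ∀ x x' y', ν00 x (br0' x' y') =
      br0' x' (ν00 x y') + br0' (ν00 x x') y' + ν00 (ν00' y' x) x' - ν00 (ν00' x' x) y'
  eqL3 : ∀ h' x y, ν1' h' (br0 x y) =
      br1 x (ν1' h' y) - br1 y (ν1' h' x) + ν1' (ν01 y h') x - ν1' (ν01 x h') y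
  eqL4 : ∀ h x' y', ν1 h (br0' x' y') =
      br1' x' (ν1 h y') - br1' y' (ν1 h x') + ν1 (ν01' y' h) x' - ν1 (ν01' x' h) y'
  eqL5 : ∀ x' x h, ν01' x' (br1 x h) =
      br1 x (ν01' x' h) + br1 (ν00' x' x) h + ν1' (ν1 h x') x - ν01' (ν00 x x') h
  eqL6 : ∀ x x' h', ν01 x (br1' x' h') =
      br1' x' (ν01 x h') + br1' (ν00 x x') h' + ν1 (ν1' h' x) x' - ν01 (ν00' x' x) h'

/-- A matched pair of strict pre-Lie 2-algebras. -/
structure IsMatchedPairPreLie2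
    (d : g1 → g0) (m00 : g0 → g0 → g0) (m01 : g0 → g1 → g1) (m10 : g1 → g0 → g1)
    (d' : h1 → h0) (n00 : h0 → h0 → h0) (n01 : h0 → h1 → h1) (n10 : h1 → h0 → h1)
    (ρ00 : g0 → h0 → h0) (ρ01 : g0 → h1 → h1) (ρ1 : g1 → h0 → h1)
    (μ00 : g0 → h0 → h0) (μ01 : g0 → h1 → h1) (μ1 : g1 → h0 → h1)
    (ρ00' : h0 → g0 → g0) (ρ01' : h0 → g1 → g1) (ρ1' : h1 → g0 → g1)
    (μ00' : h0 → g0 → g0) (μ01' : h0 → g1 → g1) (μ1' : h1 → g0 → g1) : Prop where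
  alg : IsStrictPreLie2 K d m00 m01 m10
  alg' : IsStrictPreLie2 K d' n00 n01 n10
  rep : IsStrictRepPreLie2 K d m00 m01 m10 d' ρ00 ρ01 ρ1 μ00 μ01 μ1
  rep' : IsStrictRepPreLie2 K d' n00 n01 n10 d ρ00' ρ01' ρ1' μ00' μ01' μ1'
  eqM1 : ∀ a' x y, μ1' a' (m00 x y - m00 y x) =
      m01 x (μ1' a' y) - m01 y (μ1' a' x) + μ1' (ρ01 y a') x - μ1' (ρ01 x a') y
  eqM2 : ∀ a x' y', μ1 a (n00 x' y' - n00 y' x') =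
      n01 x' (μ1 a y') - n01 y' (μ1 a x') + μ1 (ρ01' y' a) x' - μ1 (ρ01' x' a) y'
  eqM3 : ∀ z' x y, μ00' z' (m00 x y - m00 y x) =
      m00 x (μ00' z' y) - m00 y (μ00' z' x) + μ00' (ρ00 y z') x - μ00' (ρ00 x z') y
  eqM4 : ∀ z x' y', μ00 z (n00 x' y' - n00 y' x') =
      n00 x' (μ00 z y') - n00 y' (μ00 z x') + μ00 (ρ00' y' z) x' - μ00 (ρ00' x' z) y'
  eqM5 : ∀ y' x a, μ01' y' (m01 x a - m10 a x) =
      m01 x (μ01' y' a) - m10 a (μ00' y' x) + μ1' (ρ1 a y') x - μ01' (ρ00 x y') a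
  eqM6 : ∀ y x' a', μ01 y (n01 x' a' - n10 a' x') =
      n01 x' (μ01 y a') - n10 a' (μ00 y x') + μ1 (ρ1' a' y) x' - μ01 (ρ00' x' y) a'
  eqM7 : ∀ x y' a', ρ01 x (n01 y' a') =
      n01 (ρ00 x y' - μ00 x y') a' + ρ01 (μ00' y' x - ρ00' y' x) a'
        + n01 y' (ρ01 x a') + μ1 (μ1' a' x) y'
  eqM8 : ∀ x' y a, ρ01' x' (m01 y a) =
      m01 (ρ00' x' y - μ00' x' y) a + ρ01' (μ00 y x' - ρ00 y x') a
        + m01 y (ρ01' x' a) + μ1' (μ1 a x') y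
  eqM9 : ∀ x a' y', ρ01 x (n10 a' y') =
      n10 (ρ01 x a' - μ01 x a') y' + ρ1 (μ1' a' x - ρ1' a' x) y'
        + n10 a' (ρ00 x y') + μ01 (μ00' y' x) a'
  eqM10 : ∀ x' a y, ρ01' x' (m10 a y) =
      m10 (ρ01' x' a - μ01' x' a) y + ρ1' (μ1 a x' - ρ1 a x') y
        + m10 a (ρ00' x' y) + μ01' (μ00 y x') a
  eqM11 : ∀ a x' y', ρ1 a (n00 x' y') =
      n10 (ρ1 a x' - μ1 a x') y' + ρ1 (μ01' x' a - ρ01' x' a) y'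
        + n01 x' (ρ1 a y') + μ1 (μ01' y' a) x'
  eqM12 : ∀ a' x y, ρ1' a' (m00 x y) =
      m10 (ρ1' a' x - μ1' a' x) y + ρ1' (μ01 x a' - ρ01 x a') y
        + m01 x (ρ1' a' y) + μ1' (μ01 y a') x
  eqM13 : ∀ x y' z', ρ00 x (n00 y' z') =
      n00 (ρ00 x y' - μ00 x y') z' + ρ00 (μ00' y' x - ρ00' y' x) z'
        + n00 y' (ρ00 x z') + μ00 (μ00' z' x) y'
  eqM14 : ∀ x' y z, ρ00' x' (m00 y z) =
      m00 (ρ00' x' y - μ00' x' y) z + ρ00' (μ00 y x' - ρ00 y x') z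
        + m00 y (ρ00' x' z) + μ00' (μ00 z x') y

end Matched

end PreLie2

open PreLie2 Module

/-- a Rota-Baxter operator of weight `1` on a strict associative 2-algebra
yields a strict pre-Lie 2-algebra. -/
theorem rotaBaxter_weight_one_gives_strict_preLie2
    {K : Type*} [Field K] [CharZero K]
    {A0 A1 : Type*} [AddCommGroup A0] [Module K A0] [FiniteDimensional K A0]
    [AddCommGroup A1] [Module K A1] [FiniteDimensional K A1]
    (d : A1 →ₗ[K] A0) (m00 : A0 →ₗ[K] A0 →ₗ[K] A0) (m01 : A0 →ₗ[K] A1 →ₗ[K] A1)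
    (m10 : A1 →ₗ[K] A0 →ₗ[K] A1)
    (hA : IsStrictAssoc2 K (⇑d) (fun x y => m00 x y) (fun x a => m01 x a) (fun a x => m10 a x))
    (R0 : A0 →ₗ[K] A0) (R1 : A1 →ₗ[K] A1)
    (hchain : ∀ a, R0 (d a) = d (R1 a))
    (hrb00 : ∀ x y, R0 (m00 (R0 x) y + m00 x (R0 y) - m00 x y) = m00 (R0 x) (R0 y))
    (hrb01 : ∀ x a, R1 (m01 (R0 x) a + m01 x (R1 a) - m01 x a) = m01 (R0 x) (R1 a))
    (hrb10 : ∀ a x, R1 (m10 (R1 a) x + m10 a (R0 x) - m10 a x) = m10 (R1 a) (R0 x)) :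
    IsStrictPreLie2 K (⇑d)
      (fun x y => m00 (R0 x) y - m00 y (R0 x) - m00 x y)
      (fun x a => m01 (R0 x) a - m10 a (R0 x) - m01 x a)
      (fun a x => m10 (R1 a) x - m01 x (R1 a) - m10 a x) := by
  have h000 : ∀ x y z, m00 x (m00 y z) = m00 (m00 x y) z := hA.assoc000
  have h001 : ∀ x y a, m01 x (m01 y a) = m01 (m00 x y) a := hA.assoc001
  have h010 : ∀ x a y, m01 x (m10 a y) = m10 (m01 x a) y := hA.assoc010
  have h100 : ∀ a x y, m10 a (m00 x y) = m10 (m10 a x) y := hA.assoc100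
  have hd01 : ∀ x a, d (m01 x a) = m00 x (d a) := hA.d_m01
  have hd10 : ∀ a x, d (m10 a x) = m00 (d a) x := hA.d_m10
  have hdmix : ∀ a b, m01 (d a) b = m10 a (d b) := hA.d_mix
  have key0 : ∀ x y : A0, R0 (m00 (R0 x) y - m00 y (R0 x) - m00 x y)
      = m00 (R0 x) (R0 y) - R0 (m00 x (R0 y)) - R0 (m00 y (R0 x)) := by
    intro x y
    have h := hrb00 x y
    simp only [map_add, map_sub] at h ⊢
    rw [← h]; abel
  have keyA : ∀ (a : A1) (x : A0), R1 (m10 (R1 a) x - m01 x (R1 a) - m10 a x)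
      = m10 (R1 a) (R0 x) - R1 (m10 a (R0 x)) - R1 (m01 x (R1 a)) := by
    intro a x
    have h := hrb10 a x
    simp only [map_add, map_sub] at h ⊢
    rw [← h]; abel
  have keyB : ∀ (x : A0) (a : A1), R1 (m01 (R0 x) a - m10 a (R0 x) - m01 x a)
      = m01 (R0 x) (R1 a) - R1 (m01 x (R1 a)) - R1 (m10 a (R0 x)) := by
    intro x a
    have h := hrb01 x a
    simp only [map_add, map_sub] at h ⊢
    rw [← h]; abel
  constructor
  · exact d.isLinear
  · constructor
    · intro m
      exact ⟨fun a b => by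
          simp only [map_add, LinearMap.add_apply]; abel,
        fun c a => by
          simp only [map_smul, LinearMap.smul_apply, smul_sub]⟩
    · intro n
      exact ⟨fun a b => by simp only [map_add, LinearMap.add_apply]; abel,
        fun c a => by simp only [map_smul, LinearMap.smul_apply, smul_sub]⟩
  · constructor
    · intro m
      exact ⟨fun a b => by
          simp only [map_add, LinearMap.add_apply]; abel,
        fun c a => by
          simp only [map_smul, LinearMap.smul_apply, smul_sub]⟩
    · intro n
      exact ⟨fun a b => by simp only [map_add, LinearMap.add_apply]; abel,
        fun c a => by simp only [map_smul, LinearMap.smul_apply, smul_sub]⟩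
  · constructor
    · intro m
      exact ⟨fun a b => by
          simp only [map_add, LinearMap.add_apply]; abel,
        fun c a => by
          simp only [map_smul, LinearMap.smul_apply, smul_sub]⟩
    · intro n
      exact ⟨fun a b => by simp only [map_add, LinearMap.add_apply]; abel,
        fun c a => by simp only [map_smul, LinearMap.smul_apply, smul_sub]⟩
  · intro x a
    simp only [map_sub, hd01, hd10]
  · intro a x
    simp only [map_sub, hd01, hd10, hchain]
  · intro a b
    simp only [hchain, hdmix]
  · intro x y z
    rw [key0 x y, key0 y x]
    simp only [map_add, map_sub, LinearMap.add_apply, LinearMap.sub_apply]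
    simp only [h000]
    abel
  · intro x y a
    rw [key0 x y, key0 y x]
    simp only [map_add, map_sub, LinearMap.add_apply, LinearMap.sub_apply]
    simp only [h001, h010, h100]
    abel
  · intro a x y
    rw [keyA a x, keyB x a]
    simp only [map_add, map_sub, LinearMap.add_apply, LinearMap.sub_apply]
    simp only [h001, h010, h100]
    abel
end

section
/- Let (A0, A1, d, ·) be a strict commutative associative 2-algebra (a strict associative 2-algebra with x·y = y·x for x,y ∈ A0 and x·a = a·x for x ∈ A0, a ∈ A1). Let D0 : A0 → A0, D1 : A1 → A1 be linear maps with D0∘d = d∘D1 such that D0(x·y) = D0(x)·y + x·D0(y) and D1(x·a) = D0(x)·a + x·D1(a) for all x,y ∈ A0, a ∈ A1 (i.e. (D0,D1) is a derivation), and let c ∈ K be a fixed constant. Define new multiplications by x∘y = x·D0(y) + c(x·y), x∘a = x·D1(a) + c(x·a), a∘x = a·D0(x) + c(a·x). Then (A0, A1, d, ∘) is a strict pre-Lie 2-algebra. -/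
/-!
With `x ∘ y = x·D y + c x·y`, the derivation rule collapses associators:
`x ∘ (y ∘ u) - (x ∘ y) ∘ u = (x·y)·(D² u + c D u)` for `u` in `A0` or `A1`, while
`a ∘ (x ∘ y) - (a ∘ x) ∘ y` and `x ∘ (a ∘ y) - (x ∘ a) ∘ y` both equal `(x·(D² y + c D y))·a`.
Commutativity of `·` then gives the pre-Lie identities.
-/

namespace PreLie2

section Twist

variable {K M N P : Type*} [CommRing K] [AddCommGroup M] [Module K M] [AddCommGroup N]
  [Module K N] [AddCommGroup P] [Module K P]

def twistMul (B : M →ₗ[K] N →ₗ[K] P) (D : N →ₗ[K] N) (c : K) : M →ₗ[K] N →ₗ[K] P :=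
  B.compl₂ D + c • B

@[simp]
theorem twistMul_apply (B : M →ₗ[K] N →ₗ[K] P) (D : N →ₗ[K] N) (c : K) (m : M) (n : N) :
    twistMul B D c m n = B m (D n) + c • B m n :=
  rfl

end Twist

theorem isBilin_linearMap {K M N P : Type*} [Field K] [AddCommGroup M] [Module K M]
    [AddCommGroup N] [Module K N] [AddCommGroup P] [Module K P] (B : M →ₗ[K] N →ₗ[K] P) :
    IsBilin K fun m n => B m n :=
  ⟨fun m => (B m).isLinear, fun n => (B.flip n).isLinear⟩

section Associator

variable {K A M : Type*} [CommRing K] [AddCommGroup A] [Module K A] [AddCommGroup M]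
  [Module K M] {mul : A →ₗ[K] A →ₗ[K] A} {act : A →ₗ[K] M →ₗ[K] M} {D : A →ₗ[K] A}
  {DM : M →ₗ[K] M}

theorem twistMul_act_assoc (hassoc : ∀ x y a, act x (act y a) = act (mul x y) a)
    (hder : ∀ x a, DM (act x a) = act (D x) a + act x (DM a)) (c : K) (x y : A) (a : M) :
    twistMul act DM c x (twistMul act DM c y a) - twistMul act DM c (twistMul mul D c x y) a =
      act (mul x y) (DM (DM a) + c • DM a) := by
  simp only [twistMul_apply, map_add, map_smul, hder, hassoc, LinearMap.add_apply,
    LinearMap.smul_apply]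
  module

theorem twistMul_flip_assoc (hassoc : ∀ x y a, act x (act y a) = act (mul x y) a)
    (hcomm : ∀ x y, mul x y = mul y x) (hder : ∀ x y, D (mul x y) = mul (D x) y + mul x (D y))
    (c : K) (a : M) (x y : A) :
    twistMul act.flip D c a (twistMul mul D c x y) -
        twistMul act.flip D c (twistMul act.flip D c a x) y =
      act (mul x (D (D y) + c • D y)) a := by
  simp only [twistMul_apply, LinearMap.flip_apply, map_add, map_smul, hder, hassoc,
    LinearMap.add_apply, LinearMap.smul_apply]
  rw [hcomm (D y) (D x), hcomm y (D x), hcomm (D y) x, hcomm y x]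
  module

theorem twistMul_act_flip_assoc (hassoc : ∀ x y a, act x (act y a) = act (mul x y) a)
    (hcomm : ∀ x y, mul x y = mul y x)
    (hder : ∀ x a, DM (act x a) = act (D x) a + act x (DM a)) (c : K) (a : M) (x y : A) :
    twistMul act DM c x (twistMul act.flip D c a y) -
        twistMul act.flip D c (twistMul act DM c x a) y =
      act (mul x (D (D y) + c • D y)) a := by
  simp only [twistMul_apply, LinearMap.flip_apply, map_add, map_smul, hder, hassoc,
    LinearMap.add_apply, LinearMap.smul_apply]
  rw [hcomm (D y) x, hcomm y x]
  module

end Associator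

end PreLie2

open PreLie2 Module

theorem derivation_gives_strict_preLie2_general
    {K : Type*} [Field K]
    {A0 A1 : Type*} [AddCommGroup A0] [Module K A0]
    [AddCommGroup A1] [Module K A1]
    (d : A1 →ₗ[K] A0) (m00 : A0 →ₗ[K] A0 →ₗ[K] A0) (m01 : A0 →ₗ[K] A1 →ₗ[K] A1)
    (m10 : A1 →ₗ[K] A0 →ₗ[K] A1)
    (hA : IsStrictAssoc2 K (⇑d) (fun x y => m00 x y) (fun x a => m01 x a) (fun a x => m10 a x))
    (hcomm0 : ∀ x y, m00 x y = m00 y x)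
    (hcomm1 : ∀ x a, m01 x a = m10 a x)
    (D0 : A0 →ₗ[K] A0) (D1 : A1 →ₗ[K] A1)
    (hchain : ∀ a, D0 (d a) = d (D1 a))
    (hder0 : ∀ x y, D0 (m00 x y) = m00 (D0 x) y + m00 x (D0 y))
    (hder1 : ∀ x a, D1 (m01 x a) = m01 (D0 x) a + m01 x (D1 a))
    (c : K) :
    IsStrictPreLie2 K (⇑d)
      (fun x y => m00 x (D0 y) + c • m00 x y)
      (fun x a => m01 x (D1 a) + c • m01 x a)
      (fun a x => m10 a (D0 x) + c • m10 a x) := by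
  obtain rfl : m10 = m01.flip := LinearMap.ext₂ fun a x => (hcomm1 x a).symm
  show IsStrictPreLie2 K d (fun x y => twistMul m00 D0 c x y) (fun x a => twistMul m01 D1 c x a)
    (fun a x => twistMul m01.flip D0 c a x)
  exact
    { d_lin := d.isLinear
      m00_bilin := isBilin_linearMap (twistMul m00 D0 c)
      m01_bilin := isBilin_linearMap (twistMul m01 D1 c)
      m10_bilin := isBilin_linearMap (twistMul m01.flip D0 c)
      d_m01 := fun x a => by simp only [twistMul_apply, map_add, map_smul, hA.d_m01, hchain]
      d_m10 := fun a x => by simp only [twistMul_apply, map_add, map_smul, hA.d_m10]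
      d_mix := fun a b => by simp only [twistMul_apply, hchain, hA.d_mix]
      preLie0 := fun x y z => by
        rw [twistMul_act_assoc hA.assoc000 hder0, twistMul_act_assoc hA.assoc000 hder0, hcomm0 x y]
      preLie1 := fun x y a => by
        rw [twistMul_act_assoc hA.assoc001 hder1, twistMul_act_assoc hA.assoc001 hder1, hcomm0 x y]
      preLie2 := fun a x y => by
        rw [twistMul_flip_assoc hA.assoc001 hcomm0 hder0,
          twistMul_act_flip_assoc hA.assoc001 hcomm0 hder1] }

/-- a derivation on a strict commutative associative 2-algebra, together with a
constant `c`, yields a strict pre-Lie 2-algebra. -/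
theorem derivation_gives_strict_preLie2
    {K : Type*} [Field K] [CharZero K]
    {A0 A1 : Type*} [AddCommGroup A0] [Module K A0] [FiniteDimensional K A0]
    [AddCommGroup A1] [Module K A1] [FiniteDimensional K A1]
    (d : A1 →ₗ[K] A0) (m00 : A0 →ₗ[K] A0 →ₗ[K] A0) (m01 : A0 →ₗ[K] A1 →ₗ[K] A1)
    (m10 : A1 →ₗ[K] A0 →ₗ[K] A1)
    (hA : IsStrictAssoc2 K (⇑d) (fun x y => m00 x y) (fun x a => m01 x a) (fun a x => m10 a x))
    (hcomm0 : ∀ x y, m00 x y = m00 y x)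
    (hcomm1 : ∀ x a, m01 x a = m10 a x)
    (D0 : A0 →ₗ[K] A0) (D1 : A1 →ₗ[K] A1)
    (hchain : ∀ a, D0 (d a) = d (D1 a))
    (hder0 : ∀ x y, D0 (m00 x y) = m00 (D0 x) y + m00 x (D0 y))
    (hder1 : ∀ x a, D1 (m01 x a) = m01 (D0 x) a + m01 x (D1 a))
    (c : K) :
    IsStrictPreLie2 K (⇑d)
      (fun x y => m00 x (D0 y) + c • m00 x y)
      (fun x a => m01 x (D1 a) + c • m01 x a)
      (fun a x => m10 a (D0 x) + c • m10 a x) :=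
  derivation_gives_strict_preLie2_general d m00 m01 m10 hA hcomm0 hcomm1 D0 D1 hchain hder0 hder1 c
end

section
/- Let A = (A0, A1, d, ·) be a strict pre-Lie 2-algebra and let ((ρ0,ρ1),(μ0,μ1)) be a strict representation of A on a two-term complex ∂ : V1 → V0. Then (ρ0 − μ0, ρ1 − μ1) is a strict representation of the subadjacent strict Lie 2-algebra G(A) on the same complex ∂ : V1 → V0. -/
open PreLie2 Module

/-!
The conditions on `ρ - μ` that involve no bracket are differences of the corresponding
conditions on `ρ` and on `μ`. For the bracket conditions, the defining identities of a
representation of a pre-Lie 2-algebra express `μ(x·y)`, `μ(x·a)` and `μ(a·x)` through `ρ` and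
`μ`; substituting them, the bracket condition for `ρ - μ` becomes the one for `ρ`.
-/

namespace PreLie2

variable {K : Type*} [Field K]

theorem IsBilin.sub {M N P : Type*} [AddCommGroup M] [Module K M] [AddCommGroup N] [Module K N]
    [AddCommGroup P] [Module K P] {f g : M → N → P} (hf : IsBilin K f) (hg : IsBilin K g) :
    IsBilin K fun m n => f m n - g m n :=
  ⟨fun m => (IsLinearMap.mk' _ (hf.1 m) - IsLinearMap.mk' _ (hg.1 m)).isLinear,
    fun n => (IsLinearMap.mk' _ (hf.2 n) - IsLinearMap.mk' _ (hg.2 n)).isLinear⟩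

section Sub

variable {A B V W : Type*} [AddCommGroup B] [Module K B]
  [AddCommGroup V] [Module K V] [AddCommGroup W] [Module K W]

theorem sub_rep_commutator [AddCommGroup A] [Module K A] {mul : A → A → A} {ρ μ : A → V → V}
    (hρ : ∀ x, IsLinearMap K (ρ x)) (hμ : IsBilin K μ)
    (hρ_rep : ∀ x y v, ρ (mul x y - mul y x) v = ρ x (ρ y v) - ρ y (ρ x v))
    (hμ_eq : ∀ x y v, μ (mul x y) v + μ y (ρ x v) - ρ x (μ y v) - μ y (μ x v) = 0)
    (x y : A) (v : V) :
    ρ (mul x y - mul y x) v - μ (mul x y - mul y x) v =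
      (ρ x (ρ y v - μ y v) - μ x (ρ y v - μ y v)) -
        (ρ y (ρ x v - μ x v) - μ y (ρ x v - μ x v)) := by
  rw [(hμ.2 v).map_sub, (hρ x).map_sub, (hρ y).map_sub, (hμ.1 x).map_sub, (hμ.1 y).map_sub]
  linear_combination (norm := module) hρ_rep x y v - hμ_eq x y v + hμ_eq y x v

theorem sub_rep_mixed_commutator {m01 : A → B → B} {m10 : B → A → B}
    {ρ0 μ0 : A → V → V} {ρ0' μ0' : A → W → W} {ρ1 μ1 : B → V → W}
    (hρ0' : ∀ x, IsLinearMap K (ρ0' x)) (hμ0' : ∀ x, IsLinearMap K (μ0' x))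
    (hρ1 : ∀ a, IsLinearMap K (ρ1 a)) (hμ1 : IsBilin K μ1)
    (hρ1_rep : ∀ x a v, ρ1 (m01 x a - m10 a x) v = ρ0' x (ρ1 a v) - ρ1 a (ρ0 x v))
    (hμ1_left : ∀ x a v, μ1 (m01 x a) v - ρ0' x (μ1 a v) + μ1 a (ρ0 x v) - μ1 a (μ0 x v) = 0)
    (hμ1_right : ∀ a x v, μ1 (m10 a x) v - ρ1 a (μ0 x v) + μ0' x (ρ1 a v) - μ0' x (μ1 a v) = 0)
    (x : A) (a : B) (v : V) :
    ρ1 (m01 x a - m10 a x) v - μ1 (m01 x a - m10 a x) v =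
      (ρ0' x (ρ1 a v - μ1 a v) - μ0' x (ρ1 a v - μ1 a v)) -
        (ρ1 a (ρ0 x v - μ0 x v) - μ1 a (ρ0 x v - μ0 x v)) := by
  rw [(hμ1.2 v).map_sub, (hρ0' x).map_sub, (hμ0' x).map_sub, (hρ1 a).map_sub, (hμ1.1 a).map_sub]
  linear_combination (norm := module) hρ1_rep x a v - hμ1_left x a v + hμ1_right a x v

end Sub

section Rep

variable {g0 g1 V0 V1 : Type*}
  [AddCommGroup g0] [Module K g0] [AddCommGroup g1] [Module K g1]
  [AddCommGroup V0] [Module K V0] [AddCommGroup V1] [Module K V1]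
  {d : g1 → g0} {m00 : g0 → g0 → g0} {m01 : g0 → g1 → g1} {m10 : g1 → g0 → g1} {par : V1 → V0}
  {ρ00 μ00 : g0 → V0 → V0} {ρ01 μ01 : g0 → V1 → V1} {ρ1 μ1 : g1 → V0 → V1}

theorem IsStrictRepPreLie2.isStrictRepLie2_sub
    (h : IsStrictRepPreLie2 K d m00 m01 m10 par ρ00 ρ01 ρ1 μ00 μ01 μ1)
    (hpar : IsLinearMap K par) :
    IsStrictRepLie2 K d (fun x y => m00 x y - m00 y x) (fun x a => m01 x a - m10 a x) par
      (fun x v => ρ00 x v - μ00 x v) (fun x m => ρ01 x m - μ01 x m)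
      (fun a v => ρ1 a v - μ1 a v) := by
  obtain ⟨hρ, hμ00, hμ01, hμ1, hμ_chain, hμ_comp0, hμ_comp1, hμ_eqA0, hμ_eqA1, hμ_eqB, hμ_eqC⟩ := h
  refine
    { ρ00_bilin := hρ.ρ00_bilin.sub hμ00
      ρ01_bilin := hρ.ρ01_bilin.sub hμ01
      ρ1_bilin := hρ.ρ1_bilin.sub hμ1
      chain := fun x m => ?_
      comp0 := fun a v => ?_
      comp1 := fun a m => ?_
      rep00 := sub_rep_commutator hρ.ρ00_bilin.1 hμ00 hρ.rep00 hμ_eqA0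
      rep01 := sub_rep_commutator hρ.ρ01_bilin.1 hμ01 hρ.rep01 hμ_eqA1
      rep1 := sub_rep_mixed_commutator hρ.ρ01_bilin.1 hμ01.1 hρ.ρ1_bilin.1 hμ1 hρ.rep1
        hμ_eqB hμ_eqC }
  · rw [hpar.map_sub, hρ.chain, hμ_chain]
  · rw [hpar.map_sub, hρ.comp0, hμ_comp0]
  · rw [hρ.comp1, hμ_comp1]

end Rep

end PreLie2

theorem rep_of_strict_preLie2_gives_rep_of_subadjacent_lie2_general
    {K : Type*} [Field K]
    {A0 A1 V0 V1 : Type*} [AddCommGroup A0] [Module K A0]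
    [AddCommGroup A1] [Module K A1]
    [AddCommGroup V0] [Module K V0]
    [AddCommGroup V1] [Module K V1]
    (d : A1 →ₗ[K] A0) (m00 : A0 →ₗ[K] A0 →ₗ[K] A0) (m01 : A0 →ₗ[K] A1 →ₗ[K] A1)
    (m10 : A1 →ₗ[K] A0 →ₗ[K] A1)
    (par : V1 →ₗ[K] V0)
    (ρ00 : A0 →ₗ[K] V0 →ₗ[K] V0) (ρ01 : A0 →ₗ[K] V1 →ₗ[K] V1) (ρ1 : A1 →ₗ[K] V0 →ₗ[K] V1)
    (μ00 : A0 →ₗ[K] V0 →ₗ[K] V0) (μ01 : A0 →ₗ[K] V1 →ₗ[K] V1) (μ1 : A1 →ₗ[K] V0 →ₗ[K] V1)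
    (hrep : IsStrictRepPreLie2 K (⇑d) (fun x y => m00 x y) (fun x a => m01 x a)
      (fun a x => m10 a x) (⇑par)
      (fun x v => ρ00 x v) (fun x m => ρ01 x m) (fun a v => ρ1 a v)
      (fun x v => μ00 x v) (fun x m => μ01 x m) (fun a v => μ1 a v)) :
    IsStrictRepLie2 K (⇑d) (fun x y => m00 x y - m00 y x) (fun x a => m01 x a - m10 a x) (⇑par)
      (fun x v => ρ00 x v - μ00 x v) (fun x m => ρ01 x m - μ01 x m)
      (fun a v => ρ1 a v - μ1 a v) :=
  hrep.isStrictRepLie2_sub par.isLinear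

/-- if `((ρ0,ρ1),(μ0,μ1))` is a strict representation of a strict pre-Lie
2-algebra `A`, then `(ρ0 − μ0, ρ1 − μ1)` is a strict representation of the subadjacent
strict Lie 2-algebra `G(A)`. -/
theorem rep_of_strict_preLie2_gives_rep_of_subadjacent_lie2
    {K : Type*} [Field K] [CharZero K]
    {A0 A1 V0 V1 : Type*} [AddCommGroup A0] [Module K A0] [FiniteDimensional K A0]
    [AddCommGroup A1] [Module K A1] [FiniteDimensional K A1]
    [AddCommGroup V0] [Module K V0] [FiniteDimensional K V0]
    [AddCommGroup V1] [Module K V1] [FiniteDimensional K V1]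
    (d : A1 →ₗ[K] A0) (m00 : A0 →ₗ[K] A0 →ₗ[K] A0) (m01 : A0 →ₗ[K] A1 →ₗ[K] A1)
    (m10 : A1 →ₗ[K] A0 →ₗ[K] A1)
    (hA : IsStrictPreLie2 K (⇑d) (fun x y => m00 x y) (fun x a => m01 x a) (fun a x => m10 a x))
    (par : V1 →ₗ[K] V0)
    (ρ00 : A0 →ₗ[K] V0 →ₗ[K] V0) (ρ01 : A0 →ₗ[K] V1 →ₗ[K] V1) (ρ1 : A1 →ₗ[K] V0 →ₗ[K] V1)
    (μ00 : A0 →ₗ[K] V0 →ₗ[K] V0) (μ01 : A0 →ₗ[K] V1 →ₗ[K] V1) (μ1 : A1 →ₗ[K] V0 →ₗ[K] V1)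
    (hrep : IsStrictRepPreLie2 K (⇑d) (fun x y => m00 x y) (fun x a => m01 x a)
      (fun a x => m10 a x) (⇑par)
      (fun x v => ρ00 x v) (fun x m => ρ01 x m) (fun a v => ρ1 a v)
      (fun x v => μ00 x v) (fun x m => μ01 x m) (fun a v => μ1 a v)) :
    IsStrictRepLie2 K (⇑d) (fun x y => m00 x y - m00 y x) (fun x a => m01 x a - m10 a x) (⇑par)
      (fun x v => ρ00 x v - μ00 x v) (fun x m => ρ01 x m - μ01 x m)
      (fun a v => ρ1 a v - μ1 a v) :=
  rep_of_strict_preLie2_gives_rep_of_subadjacent_lie2_general d m00 m01 m10 par ρ00 ρ01 ρ1 μ00 μ01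
    μ1 hrep
end

section
/- Let A = (A0, A1, d, ·) be a strict pre-Lie 2-algebra and let ((ρ0,ρ1),(μ0,μ1)) be a strict representation of A on a two-term complex ∂ : V1 → V0. Define a multiplication ∗ on the graded space (A0 ⊕ V0, A1 ⊕ V1) with differential d + ∂ by (x+u)∗(y+v) = x·y + ρ0(x)v + μ0(y)u, (x+u)∗(a+m) = x·a + ρ0(x)m + μ1(a)u, (a+m)∗(y+v) = a·y + ρ1(a)v + μ0(y)m, for x,y ∈ A0, a ∈ A1, u,v ∈ V0, m ∈ V1. Then (A0 ⊕ V0, A1 ⊕ V1, d + ∂, ∗) is a strict pre-Lie 2-algebra (the semidirect product). -/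
/-!
Every axiom of the semidirect product splits into an `A`-component, which is the same axiom for
`A`, and a `V`-component, which is linear in the `V`-arguments. In the pre-Lie identities the
`ρ`-terms combine into the representation condition of `G(A)` applied to a commutator and the
`μ`-terms into the defining identities of `μ`; compatibility with `d + ∂` says exactly that `ρ`
and `μ` commute with the differentials.
-/

namespace PreLie2

variable {K : Type*} [Field K]

section General

variable {M₀ M₁ N₀ N₁ P₀ P₁ : Type*}
  [AddCommGroup M₀] [Module K M₀] [AddCommGroup M₁] [Module K M₁]
  [AddCommGroup N₀] [Module K N₀] [AddCommGroup N₁] [Module K N₁]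
  [AddCommGroup P₀] [Module K P₀] [AddCommGroup P₁] [Module K P₁]

def semidirectMul (f : M₀ →ₗ[K] N₀ →ₗ[K] P₀) (g : M₀ →ₗ[K] N₁ →ₗ[K] P₁)
    (h : N₀ →ₗ[K] M₁ →ₗ[K] P₁) (p : M₀ × M₁) (q : N₀ × N₁) : P₀ × P₁ :=
  (f p.1 q.1, g p.1 q.2 + h q.1 p.2)

theorem isBilin_semidirectMul (f : M₀ →ₗ[K] N₀ →ₗ[K] P₀) (g : M₀ →ₗ[K] N₁ →ₗ[K] P₁)
    (h : N₀ →ₗ[K] M₁ →ₗ[K] P₁) : IsBilin K (semidirectMul f g h) := by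
  refine ⟨fun p => ⟨fun q r => ?_, fun c q => ?_⟩, fun q => ⟨fun p r => ?_, fun c p => ?_⟩⟩ <;>
    ext <;> simp only [semidirectMul, Prod.fst_add, Prod.snd_add, Prod.smul_fst, Prod.smul_snd,
      map_add, map_smul, LinearMap.add_apply, LinearMap.smul_apply, smul_add] <;> abel

end General

variable {A0 A1 V0 V1 : Type*}
  [AddCommGroup A0] [Module K A0] [AddCommGroup A1] [Module K A1]
  [AddCommGroup V0] [Module K V0] [AddCommGroup V1] [Module K V1]

/-- Covers both the pre-Lie identity of `A0 ⊕ V0` (`M = A0`, `W = V0`) and the left-module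
identity of `A1 ⊕ V1` over it (`M = A1`, `W = V1`). -/
theorem semidirectMul_preLie_left {M W : Type*} [AddCommGroup M] [Module K M]
    [AddCommGroup W] [Module K W] {m00 : A0 →ₗ[K] A0 →ₗ[K] A0} {ρ00 μ00 : A0 →ₗ[K] V0 →ₗ[K] V0}
    {m : A0 →ₗ[K] M →ₗ[K] M} {ρ : A0 →ₗ[K] W →ₗ[K] W} {μ : M →ₗ[K] V0 →ₗ[K] W}
    (hm : ∀ x y a, m x (m y a) - m (m00 x y) a = m y (m x a) - m (m00 y x) a)
    (hρ : ∀ x y w, ρ (m00 x y - m00 y x) w = ρ x (ρ y w) - ρ y (ρ x w))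
    (hμ : ∀ x a v, μ (m x a) v - ρ x (μ a v) + μ a (ρ00 x v) - μ a (μ00 x v) = 0) :
    ∀ (p q : A0 × V0) (r : M × W),
      semidirectMul m ρ μ p (semidirectMul m ρ μ q r) -
          semidirectMul m ρ μ (semidirectMul m00 ρ00 μ00 p q) r =
        semidirectMul m ρ μ q (semidirectMul m ρ μ p r) -
          semidirectMul m ρ μ (semidirectMul m00 ρ00 μ00 q p) r := by
  rintro ⟨x, u⟩ ⟨y, v⟩ ⟨a, w⟩
  refine Prod.ext (hm x y a) ?_
  have hρxy := hρ x y w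
  simp only [map_sub, LinearMap.sub_apply] at hρxy
  simp only [semidirectMul, Prod.snd_sub, map_add]
  linear_combination (norm := abel) -hρxy + hμ y a u - hμ x a v

theorem semidirectMul_preLie_right {m00 : A0 →ₗ[K] A0 →ₗ[K] A0} {m01 : A0 →ₗ[K] A1 →ₗ[K] A1}
    {m10 : A1 →ₗ[K] A0 →ₗ[K] A1} {ρ00 μ00 : A0 →ₗ[K] V0 →ₗ[K] V0}
    {ρ01 μ01 : A0 →ₗ[K] V1 →ₗ[K] V1} {ρ1 μ1 : A1 →ₗ[K] V0 →ₗ[K] V1}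
    (hm : ∀ a x y, m10 a (m00 x y) - m10 (m10 a x) y = m01 x (m10 a y) - m10 (m01 x a) y)
    (hρ : ∀ x a v, ρ1 (m01 x a - m10 a x) v = ρ01 x (ρ1 a v) - ρ1 a (ρ00 x v))
    (hμ1 : ∀ a x v, μ1 (m10 a x) v - ρ1 a (μ00 x v) + μ01 x (ρ1 a v) - μ01 x (μ1 a v) = 0)
    (hμ01 : ∀ x y w, μ01 (m00 x y) w + μ01 y (ρ01 x w) - ρ01 x (μ01 y w) - μ01 y (μ01 x w) = 0) :
    ∀ (r : A1 × V1) (p q : A0 × V0),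
      semidirectMul m10 ρ1 μ01 r (semidirectMul m00 ρ00 μ00 p q) -
          semidirectMul m10 ρ1 μ01 (semidirectMul m10 ρ1 μ01 r p) q =
        semidirectMul m01 ρ01 μ1 p (semidirectMul m10 ρ1 μ01 r q) -
          semidirectMul m10 ρ1 μ01 (semidirectMul m01 ρ01 μ1 p r) q := by
  rintro ⟨a, w⟩ ⟨x, u⟩ ⟨y, v⟩
  refine Prod.ext (hm a x y) ?_
  have hρxa := hρ x a v
  simp only [map_sub, LinearMap.sub_apply] at hρxa
  simp only [semidirectMul, Prod.snd_sub, map_add]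
  linear_combination (norm := abel) hρxa - hμ1 a y u + hμ01 x y w

end PreLie2

open PreLie2 Module

theorem semidirect_product_strict_preLie2_general
    {K : Type*} [Field K]
    {A0 A1 V0 V1 : Type*} [AddCommGroup A0] [Module K A0]
    [AddCommGroup A1] [Module K A1]
    [AddCommGroup V0] [Module K V0]
    [AddCommGroup V1] [Module K V1]
    (d : A1 →ₗ[K] A0) (m00 : A0 →ₗ[K] A0 →ₗ[K] A0) (m01 : A0 →ₗ[K] A1 →ₗ[K] A1)
    (m10 : A1 →ₗ[K] A0 →ₗ[K] A1)
    (hA : IsStrictPreLie2 K (⇑d) (fun x y => m00 x y) (fun x a => m01 x a) (fun a x => m10 a x))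
    (par : V1 →ₗ[K] V0)
    (ρ00 : A0 →ₗ[K] V0 →ₗ[K] V0) (ρ01 : A0 →ₗ[K] V1 →ₗ[K] V1) (ρ1 : A1 →ₗ[K] V0 →ₗ[K] V1)
    (μ00 : A0 →ₗ[K] V0 →ₗ[K] V0) (μ01 : A0 →ₗ[K] V1 →ₗ[K] V1) (μ1 : A1 →ₗ[K] V0 →ₗ[K] V1)
    (hrep : IsStrictRepPreLie2 K (⇑d) (fun x y => m00 x y) (fun x a => m01 x a)
      (fun a x => m10 a x) (⇑par)
      (fun x v => ρ00 x v) (fun x m => ρ01 x m) (fun a v => ρ1 a v)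
      (fun x v => μ00 x v) (fun x m => μ01 x m) (fun a v => μ1 a v)) :
    IsStrictPreLie2 K
      (fun p : A1 × V1 => ((d p.1, par p.2) : A0 × V0))
      (fun p q : A0 × V0 => ((m00 p.1 q.1, ρ00 p.1 q.2 + μ00 q.1 p.2) : A0 × V0))
      (fun (p : A0 × V0) (q : A1 × V1) => ((m01 p.1 q.1, ρ01 p.1 q.2 + μ1 q.1 p.2) : A1 × V1))
      (fun (p : A1 × V1) (q : A0 × V0) => ((m10 p.1 q.1, ρ1 p.1 q.2 + μ01 q.1 p.2) : A1 × V1)) := by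
  obtain ⟨hρ, -, -, -, hμchain, hμcomp0, hμcomp1, hμA0, hμA1, hμB, hμC⟩ := hrep
  exact
    { d_lin := (d.prodMap par).isLinear
      m00_bilin := isBilin_semidirectMul m00 ρ00 μ00
      m01_bilin := isBilin_semidirectMul m01 ρ01 μ1
      m10_bilin := isBilin_semidirectMul m10 ρ1 μ01
      d_m01 := fun p q => Prod.ext (hA.d_m01 p.1 q.1) (by simp [hρ.chain, hμcomp0])
      d_m10 := fun p q => Prod.ext (hA.d_m10 p.1 q.1) (by simp [hρ.comp0, hμchain])
      d_mix := fun p q => Prod.ext (hA.d_mix p.1 q.1) (by simp [hρ.comp1, hμcomp1])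
      preLie0 := semidirectMul_preLie_left hA.preLie0 hρ.rep00
        (fun x a v => by linear_combination (norm := abel) hμA0 x a v)
      preLie1 := semidirectMul_preLie_left hA.preLie1 hρ.rep01 hμB
      preLie2 := semidirectMul_preLie_right hA.preLie2 hρ.rep1 hμC hμA1 }

/-- the semidirect product of a strict pre-Lie 2-algebra with a strict
representation is a strict pre-Lie 2-algebra. -/
theorem semidirect_product_strict_preLie2
    {K : Type*} [Field K] [CharZero K]
    {A0 A1 V0 V1 : Type*} [AddCommGroup A0] [Module K A0] [FiniteDimensional K A0]
    [AddCommGroup A1] [Module K A1] [FiniteDimensional K A1]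
    [AddCommGroup V0] [Module K V0] [FiniteDimensional K V0]
    [AddCommGroup V1] [Module K V1] [FiniteDimensional K V1]
    (d : A1 →ₗ[K] A0) (m00 : A0 →ₗ[K] A0 →ₗ[K] A0) (m01 : A0 →ₗ[K] A1 →ₗ[K] A1)
    (m10 : A1 →ₗ[K] A0 →ₗ[K] A1)
    (hA : IsStrictPreLie2 K (⇑d) (fun x y => m00 x y) (fun x a => m01 x a) (fun a x => m10 a x))
    (par : V1 →ₗ[K] V0)
    (ρ00 : A0 →ₗ[K] V0 →ₗ[K] V0) (ρ01 : A0 →ₗ[K] V1 →ₗ[K] V1) (ρ1 : A1 →ₗ[K] V0 →ₗ[K] V1)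
    (μ00 : A0 →ₗ[K] V0 →ₗ[K] V0) (μ01 : A0 →ₗ[K] V1 →ₗ[K] V1) (μ1 : A1 →ₗ[K] V0 →ₗ[K] V1)
    (hrep : IsStrictRepPreLie2 K (⇑d) (fun x y => m00 x y) (fun x a => m01 x a)
      (fun a x => m10 a x) (⇑par)
      (fun x v => ρ00 x v) (fun x m => ρ01 x m) (fun a v => ρ1 a v)
      (fun x v => μ00 x v) (fun x m => μ01 x m) (fun a v => μ1 a v)) :
    IsStrictPreLie2 K
      (fun p : A1 × V1 => ((d p.1, par p.2) : A0 × V0))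
      (fun p q : A0 × V0 => ((m00 p.1 q.1, ρ00 p.1 q.2 + μ00 q.1 p.2) : A0 × V0))
      (fun (p : A0 × V0) (q : A1 × V1) => ((m01 p.1 q.1, ρ01 p.1 q.2 + μ1 q.1 p.2) : A1 × V1))
      (fun (p : A1 × V1) (q : A0 × V0) => ((m10 p.1 q.1, ρ1 p.1 q.2 + μ01 q.1 p.2) : A1 × V1)) :=
  semidirect_product_strict_preLie2_general d m00 m01 m10 hA par ρ00 ρ01 ρ1 μ00 μ01 μ1 hrep
end

section
/- Let A = (A0, A1, d, ·) be a strict pre-Lie 2-algebra. Define L0(x) by L0(x)y = x·y, L0(x)a = x·a; R0(x) by R0(x)y = y·x, R0(x)a = a·x; L1(a) : A0 → A1 by L1(a)x = a·x; and R1(a) : A0 → A1 by R1(a)x = x·a, for x,y ∈ A0, a ∈ A1. Then ((L0, L1), (R0, R1)) is a strict representation of A on the complex d : A1 → A0 (the regular representation). -/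
open PreLie2 Module

/-! Each axiom of the regular representation is, after expanding the brackets of the
subadjacent Lie 2-algebra by bilinearity, one of the three left-symmetry identities of `A`
with its arguments permuted. -/

namespace PreLie2

variable {K : Type*} [Field K]

theorem IsBilin.flip {M N P : Type*} [AddCommGroup M] [Module K M] [AddCommGroup N] [Module K N]
    [AddCommGroup P] [Module K P] {f : M → N → P} (hf : IsBilin K f) :
    IsBilin K fun n m => f m n :=
  ⟨hf.2, hf.1⟩

namespace IsStrictPreLie2

variable {A0 A1 : Type*} [AddCommGroup A0] [Module K A0] [AddCommGroup A1] [Module K A1]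
  {d : A1 → A0} {m00 : A0 → A0 → A0} {m01 : A0 → A1 → A1} {m10 : A1 → A0 → A1}

theorem isStrictRepLie2_leftMul (hA : IsStrictPreLie2 K d m00 m01 m10) :
    IsStrictRepLie2 K d (fun x y => m00 x y - m00 y x) (fun x a => m01 x a - m10 a x)
      d m00 m01 m10 where
  ρ00_bilin := hA.m00_bilin
  ρ01_bilin := hA.m01_bilin
  ρ1_bilin := hA.m10_bilin
  chain x a := (hA.d_m01 x a).symm
  comp0 a x := (hA.d_m10 a x).symm
  comp1 := hA.d_mix
  rep00 x y z := by
    rw [(hA.m00_bilin.2 z).map_sub]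
    linear_combination (norm := abel) -hA.preLie0 x y z
  rep01 x y a := by
    rw [(hA.m01_bilin.2 a).map_sub]
    linear_combination (norm := abel) -hA.preLie1 x y a
  rep1 x a y := by
    rw [(hA.m10_bilin.2 y).map_sub]
    linear_combination (norm := abel) hA.preLie2 a x y

theorem isStrictRepPreLie2_regular (hA : IsStrictPreLie2 K d m00 m01 m10) :
    IsStrictRepPreLie2 K d m00 m01 m10 d m00 m01 m10
      (fun x y => m00 y x) (fun x a => m10 a x) (fun a x => m01 x a) where
  toRepLie := hA.isStrictRepLie2_leftMul
  μ00_bilin := hA.m00_bilin.flip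
  μ01_bilin := hA.m10_bilin.flip
  μ1_bilin := hA.m01_bilin.flip
  μchain x a := (hA.d_m10 a x).symm
  μcomp0 a x := (hA.d_m01 x a).symm
  μcomp1 a b := (hA.d_mix b a).symm
  eqA0 x y z := by linear_combination (norm := abel) hA.preLie0 z x y
  eqA1 x y a := by linear_combination (norm := abel) hA.preLie2 a x y
  eqB x a y := by linear_combination (norm := abel) -hA.preLie1 x y a
  eqC a x y := by linear_combination (norm := abel) -hA.preLie2 a y x

end IsStrictPreLie2

end PreLie2

theorem regular_rep_of_strict_preLie2_general
    {K : Type*} [Field K]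
    {A0 A1 : Type*} [AddCommGroup A0] [Module K A0]
    [AddCommGroup A1] [Module K A1]
    (d : A1 →ₗ[K] A0) (m00 : A0 →ₗ[K] A0 →ₗ[K] A0) (m01 : A0 →ₗ[K] A1 →ₗ[K] A1)
    (m10 : A1 →ₗ[K] A0 →ₗ[K] A1)
    (hA : IsStrictPreLie2 K (⇑d) (fun x y => m00 x y) (fun x a => m01 x a)
      (fun a x => m10 a x)) :
    IsStrictRepPreLie2 K (⇑d) (fun x y => m00 x y) (fun x a => m01 x a) (fun a x => m10 a x)
      (⇑d)
      -- `L0` acting on `A0`, `L0` acting on `A1`, `L1 : A1 → Hom(A0, A1)`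
      (fun x y => m00 x y) (fun x a => m01 x a) (fun a x => m10 a x)
      -- `R0` acting on `A0`, `R0` acting on `A1`, `R1 : A1 → Hom(A0, A1)`
      (fun x y => m00 y x) (fun x a => m10 a x) (fun a x => m01 x a) :=
  hA.isStrictRepPreLie2_regular

/-- the regular representation `((L0, L1), (R0, R1))` of a strict pre-Lie
2-algebra on its own underlying complex `d : A1 → A0`. -/
theorem regular_rep_of_strict_preLie2
    {K : Type*} [Field K] [CharZero K]
    {A0 A1 : Type*} [AddCommGroup A0] [Module K A0] [FiniteDimensional K A0]
    [AddCommGroup A1] [Module K A1] [FiniteDimensional K A1]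
    (d : A1 →ₗ[K] A0) (m00 : A0 →ₗ[K] A0 →ₗ[K] A0) (m01 : A0 →ₗ[K] A1 →ₗ[K] A1)
    (m10 : A1 →ₗ[K] A0 →ₗ[K] A1)
    (hA : IsStrictPreLie2 K (⇑d) (fun x y => m00 x y) (fun x a => m01 x a)
      (fun a x => m10 a x)) :
    IsStrictRepPreLie2 K (⇑d) (fun x y => m00 x y) (fun x a => m01 x a) (fun a x => m10 a x)
      (⇑d)
      -- `L0` acting on `A0`, `L0` acting on `A1`, `L1 : A1 → Hom(A0, A1)`
      (fun x y => m00 x y) (fun x a => m01 x a) (fun a x => m10 a x)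
      -- `R0` acting on `A0`, `R0` acting on `A1`, `R1 : A1 → Hom(A0, A1)`
      (fun x y => m00 y x) (fun x a => m10 a x) (fun a x => m01 x a) :=
  regular_rep_of_strict_preLie2_general d m00 m01 m10 hA
end

section
/- Let (A, A'; (ρ0,ρ1), (μ0,μ1), (ρ0',ρ1'), (μ0',μ1')) be a matched pair of strict pre-Lie 2-algebras A = (A0, A1, d, ·) and A' = (A0', A1', d', ∘). Then the graded space (A0 ⊕ A0', A1 ⊕ A1') with differential d + d' and multiplication ∗ given by (x+x')∗(y+y') = x·y + x'∘y' + ρ0(x)y' + μ0'(y')x + ρ0'(x')y + μ0(y)x'; (x+x')∗(a+a') = x·a + x'∘a' + ρ0(x)a' + μ1'(a')x + ρ0'(x')a + μ1(a)x'; (a+a')∗(x+x') = a·x + a'∘x' + ρ1(a)x' + μ0'(x')a + ρ1'(a')x + μ0(x)a', for x,y ∈ A0, a ∈ A1, x',y' ∈ A0', a' ∈ A1', is a strict pre-Lie 2-algebra. -/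
namespace PreLie2

theorem IsMatchedPairPreLie2.symm {K : Type*} [Field K] {g0 g1 h0 h1 : Type*}
    [AddCommGroup g0] [Module K g0] [AddCommGroup g1] [Module K g1]
    [AddCommGroup h0] [Module K h0] [AddCommGroup h1] [Module K h1]
    {d : g1 → g0} {m00 : g0 → g0 → g0} {m01 : g0 → g1 → g1} {m10 : g1 → g0 → g1}
    {d' : h1 → h0} {n00 : h0 → h0 → h0} {n01 : h0 → h1 → h1} {n10 : h1 → h0 → h1}
    {ρ00 : g0 → h0 → h0} {ρ01 : g0 → h1 → h1} {ρ1 : g1 → h0 → h1}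
    {μ00 : g0 → h0 → h0} {μ01 : g0 → h1 → h1} {μ1 : g1 → h0 → h1}
    {ρ00' : h0 → g0 → g0} {ρ01' : h0 → g1 → g1} {ρ1' : h1 → g0 → g1}
    {μ00' : h0 → g0 → g0} {μ01' : h0 → g1 → g1} {μ1' : h1 → g0 → g1}
    (h : IsMatchedPairPreLie2 K d m00 m01 m10 d' n00 n01 n10
      ρ00 ρ01 ρ1 μ00 μ01 μ1 ρ00' ρ01' ρ1' μ00' μ01' μ1') :
    IsMatchedPairPreLie2 K d' n00 n01 n10 d m00 m01 m10
      ρ00' ρ01' ρ1' μ00' μ01' μ1' ρ00 ρ01 ρ1 μ00 μ01 μ1 :=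
  ⟨h.alg', h.alg, h.rep', h.rep, h.eqM2, h.eqM1, h.eqM4, h.eqM3, h.eqM6, h.eqM5,
    h.eqM8, h.eqM7, h.eqM10, h.eqM9, h.eqM12, h.eqM11, h.eqM14, h.eqM13⟩

section MatchedMul

variable {K : Type*} [Field K] {X X' Y Y' Z Z' : Type*}
  [AddCommGroup X] [Module K X] [AddCommGroup X'] [Module K X']
  [AddCommGroup Y] [Module K Y] [AddCommGroup Y'] [Module K Y']
  [AddCommGroup Z] [Module K Z] [AddCommGroup Z'] [Module K Z']

def matchedMul (m : X →ₗ[K] Y →ₗ[K] Z) (μ' : Y' →ₗ[K] X →ₗ[K] Z) (ρ' : X' →ₗ[K] Y →ₗ[K] Z)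
    (n : X' →ₗ[K] Y' →ₗ[K] Z') (ρ : X →ₗ[K] Y' →ₗ[K] Z') (μ : Y →ₗ[K] X' →ₗ[K] Z')
    (p : X × X') (q : Y × Y') : Z × Z' :=
  (m p.1 q.1 + μ' q.2 p.1 + ρ' p.2 q.1, n p.2 q.2 + ρ p.1 q.2 + μ q.1 p.2)

theorem isBilin_matchedMul (m : X →ₗ[K] Y →ₗ[K] Z) (μ' : Y' →ₗ[K] X →ₗ[K] Z)
    (ρ' : X' →ₗ[K] Y →ₗ[K] Z) (n : X' →ₗ[K] Y' →ₗ[K] Z') (ρ : X →ₗ[K] Y' →ₗ[K] Z')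
    (μ : Y →ₗ[K] X' →ₗ[K] Z') : IsBilin K (matchedMul m μ' ρ' n ρ μ) := by
  refine ⟨fun p => ⟨fun q r => ?_, fun c q => ?_⟩, fun q => ⟨fun p r => ?_, fun c p => ?_⟩⟩ <;>
  · simp only [matchedMul, Prod.fst_add, Prod.snd_add, Prod.smul_fst, Prod.smul_snd, map_add,
      map_smul, LinearMap.add_apply, LinearMap.smul_apply, Prod.mk_add_mk, Prod.smul_mk]
    congr 1 <;> module

theorem matchedMul_swap (m : X →ₗ[K] Y →ₗ[K] Z) (μ' : Y' →ₗ[K] X →ₗ[K] Z)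
    (ρ' : X' →ₗ[K] Y →ₗ[K] Z) (n : X' →ₗ[K] Y' →ₗ[K] Z') (ρ : X →ₗ[K] Y' →ₗ[K] Z')
    (μ : Y →ₗ[K] X' →ₗ[K] Z') (p : X × X') (q : Y × Y') :
    (matchedMul m μ' ρ' n ρ μ p q).swap = matchedMul n μ ρ m ρ' μ' p.swap q.swap :=
  Prod.ext (add_right_comm ..) (add_right_comm ..)

end MatchedMul

namespace IsMatchedPairPreLie2

variable {K : Type*} [Field K] {A0 A1 B0 B1 : Type*}
  [AddCommGroup A0] [Module K A0] [AddCommGroup A1] [Module K A1]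
  [AddCommGroup B0] [Module K B0] [AddCommGroup B1] [Module K B1]
  {d : A1 →ₗ[K] A0} {m00 : A0 →ₗ[K] A0 →ₗ[K] A0} {m01 : A0 →ₗ[K] A1 →ₗ[K] A1}
  {m10 : A1 →ₗ[K] A0 →ₗ[K] A1}
  {d' : B1 →ₗ[K] B0} {n00 : B0 →ₗ[K] B0 →ₗ[K] B0} {n01 : B0 →ₗ[K] B1 →ₗ[K] B1}
  {n10 : B1 →ₗ[K] B0 →ₗ[K] B1}
  {ρ00 : A0 →ₗ[K] B0 →ₗ[K] B0} {ρ01 : A0 →ₗ[K] B1 →ₗ[K] B1} {ρ1 : A1 →ₗ[K] B0 →ₗ[K] B1}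
  {μ00 : A0 →ₗ[K] B0 →ₗ[K] B0} {μ01 : A0 →ₗ[K] B1 →ₗ[K] B1} {μ1 : A1 →ₗ[K] B0 →ₗ[K] B1}
  {ρ00' : B0 →ₗ[K] A0 →ₗ[K] A0} {ρ01' : B0 →ₗ[K] A1 →ₗ[K] A1} {ρ1' : B1 →ₗ[K] A0 →ₗ[K] A1}
  {μ00' : B0 →ₗ[K] A0 →ₗ[K] A0} {μ01' : B0 →ₗ[K] A1 →ₗ[K] A1} {μ1' : B1 →ₗ[K] A0 →ₗ[K] A1}

local notation "IsMP" => IsMatchedPairPreLie2 K (DFunLike.coe d) (fun x y => m00 x y)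
  (fun x a => m01 x a) (fun a x => m10 a x) (DFunLike.coe d') (fun x y => n00 x y)
  (fun x a => n01 x a) (fun a x => n10 a x)
  (fun x u => ρ00 x u) (fun x m => ρ01 x m) (fun a u => ρ1 a u)
  (fun x u => μ00 x u) (fun x m => μ01 x m) (fun a u => μ1 a u)
  (fun u x => ρ00' u x) (fun u a => ρ01' u a) (fun m x => ρ1' m x)
  (fun u x => μ00' u x) (fun u a => μ01' u a) (fun m x => μ1' m x)

local notation "M00" => matchedMul m00 μ00' ρ00' n00 ρ00 μ00
local notation "M01" => matchedMul m01 μ1' ρ01' n01 ρ01 μ1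
local notation "M10" => matchedMul m10 μ01' ρ1' n10 ρ1 μ01

theorem fst_d_m01 (hmp : IsMP) (p : A0 × B0) (q : A1 × B1) :
    d (M01 p q).1 = (M00 p (d q.1, d' q.2)).1 := by
  obtain ⟨x, x'⟩ := p
  obtain ⟨a, a'⟩ := q
  simp only [matchedMul, map_add]
  linear_combination (norm := module)
    hmp.alg.d_m01 x a - hmp.rep'.μcomp0 a' x - hmp.rep'.toRepLie.chain x' a

theorem fst_d_m10 (hmp : IsMP) (a : A1 × B1) (p : A0 × B0) :
    d (M10 a p).1 = (M00 (d a.1, d' a.2) p).1 := by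
  obtain ⟨a, a'⟩ := a
  obtain ⟨x, x'⟩ := p
  simp only [matchedMul, map_add]
  linear_combination (norm := module)
    hmp.alg.d_m10 a x - hmp.rep'.μchain x' a - hmp.rep'.toRepLie.comp0 a' x

theorem fst_d_mix (hmp : IsMP) (a b : A1 × B1) :
    (M01 (d a.1, d' a.2) b).1 = (M10 a (d b.1, d' b.2)).1 := by
  obtain ⟨a, a'⟩ := a
  obtain ⟨b, b'⟩ := b
  simp only [matchedMul]
  linear_combination (norm := module)
    hmp.alg.d_mix a b - hmp.rep'.μcomp1 b' a + hmp.rep'.toRepLie.comp1 a' b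

theorem fst_preLie0 (hmp : IsMP) (p q r : A0 × B0) :
    (M00 p (M00 q r) - M00 (M00 p q) r).1 = (M00 q (M00 p r) - M00 (M00 q p) r).1 := by
  obtain ⟨x, x'⟩ := p
  obtain ⟨y, y'⟩ := q
  obtain ⟨z, z'⟩ := r
  simp only [matchedMul, Prod.fst_sub, map_add, LinearMap.add_apply]
  linear_combination (norm := (simp only [map_sub, LinearMap.sub_apply]; module))
    hmp.alg.preLie0 x y z - hmp.eqM3 z' x y + hmp.eqM14 x' y z - hmp.eqM14 y' x z
      - hmp.rep'.eqA0 x' z' y + hmp.rep'.eqA0 y' z' x - hmp.rep'.toRepLie.rep00 x' y' z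

theorem fst_preLie1 (hmp : IsMP) (p q : A0 × B0) (a : A1 × B1) :
    (M01 p (M01 q a) - M01 (M00 p q) a).1 = (M01 q (M01 p a) - M01 (M00 q p) a).1 := by
  obtain ⟨x, x'⟩ := p
  obtain ⟨y, y'⟩ := q
  obtain ⟨a, a'⟩ := a
  simp only [matchedMul, Prod.fst_sub, map_add, LinearMap.add_apply]
  linear_combination (norm := (simp only [map_sub, LinearMap.sub_apply]; module))
    hmp.alg.preLie1 x y a - hmp.eqM1 a' x y + hmp.eqM8 x' y a - hmp.eqM8 y' x a
      - hmp.rep'.eqB x' a' y + hmp.rep'.eqB y' a' x - hmp.rep'.toRepLie.rep01 x' y' a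

theorem fst_preLie2 (hmp : IsMP) (a : A1 × B1) (p q : A0 × B0) :
    (M10 a (M00 p q) - M10 (M10 a p) q).1 = (M01 p (M10 a q) - M10 (M01 p a) q).1 := by
  obtain ⟨a, a'⟩ := a
  obtain ⟨x, x'⟩ := p
  obtain ⟨y, y'⟩ := q
  simp only [matchedMul, Prod.fst_sub, map_add, LinearMap.add_apply]
  linear_combination (norm := (simp only [map_sub, LinearMap.sub_apply]; module))
    hmp.alg.preLie2 a x y + hmp.eqM5 y' x a - hmp.eqM10 x' a y + hmp.eqM12 a' x y
      + hmp.rep'.eqA1 x' y' a - hmp.rep'.eqC a' y' x + hmp.rep'.toRepLie.rep1 x' a' y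

theorem sum_d_m01 (hmp : IsMP) (p : A0 × B0) (q : A1 × B1) :
    (d (M01 p q).1, d' (M01 p q).2) = M00 p (d q.1, d' q.2) :=
  Prod.ext (hmp.fst_d_m01 p q) (by
    simpa only [matchedMul, Prod.fst_swap, Prod.snd_swap, add_right_comm]
      using hmp.symm.fst_d_m01 p.swap q.swap)

theorem sum_d_m10 (hmp : IsMP) (a : A1 × B1) (p : A0 × B0) :
    (d (M10 a p).1, d' (M10 a p).2) = M00 (d a.1, d' a.2) p :=
  Prod.ext (hmp.fst_d_m10 a p) (by
    simpa only [matchedMul, Prod.fst_swap, Prod.snd_swap, add_right_comm]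
      using hmp.symm.fst_d_m10 a.swap p.swap)

theorem sum_d_mix (hmp : IsMP) (a b : A1 × B1) :
    M01 (d a.1, d' a.2) b = M10 a (d b.1, d' b.2) :=
  Prod.ext (hmp.fst_d_mix a b) (by
    simpa only [matchedMul, Prod.fst_swap, Prod.snd_swap, add_right_comm]
      using hmp.symm.fst_d_mix a.swap b.swap)

theorem sum_preLie0 (hmp : IsMP) (p q r : A0 × B0) :
    M00 p (M00 q r) - M00 (M00 p q) r = M00 q (M00 p r) - M00 (M00 q p) r :=
  Prod.ext (hmp.fst_preLie0 p q r) (by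
    simpa only [← matchedMul_swap, Prod.fst_sub, Prod.snd_sub, Prod.fst_swap]
      using hmp.symm.fst_preLie0 p.swap q.swap r.swap)

theorem sum_preLie1 (hmp : IsMP) (p q : A0 × B0) (a : A1 × B1) :
    M01 p (M01 q a) - M01 (M00 p q) a = M01 q (M01 p a) - M01 (M00 q p) a :=
  Prod.ext (hmp.fst_preLie1 p q a) (by
    simpa only [← matchedMul_swap, Prod.fst_sub, Prod.snd_sub, Prod.fst_swap]
      using hmp.symm.fst_preLie1 p.swap q.swap a.swap)

theorem sum_preLie2 (hmp : IsMP) (a : A1 × B1) (p q : A0 × B0) :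
    M10 a (M00 p q) - M10 (M10 a p) q = M01 p (M10 a q) - M10 (M01 p a) q :=
  Prod.ext (hmp.fst_preLie2 a p q) (by
    simpa only [← matchedMul_swap, Prod.fst_sub, Prod.snd_sub, Prod.fst_swap]
      using hmp.symm.fst_preLie2 a.swap p.swap q.swap)

end IsMatchedPairPreLie2

end PreLie2

open PreLie2 Module

theorem matched_pair_preLie2_gives_sum_preLie2_general
    {K : Type*} [Field K]
    {A0 A1 B0 B1 : Type*} [AddCommGroup A0] [Module K A0]
    [AddCommGroup A1] [Module K A1]
    [AddCommGroup B0] [Module K B0]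
    [AddCommGroup B1] [Module K B1]
    (d : A1 →ₗ[K] A0) (m00 : A0 →ₗ[K] A0 →ₗ[K] A0) (m01 : A0 →ₗ[K] A1 →ₗ[K] A1)
    (m10 : A1 →ₗ[K] A0 →ₗ[K] A1)
    (d' : B1 →ₗ[K] B0) (n00 : B0 →ₗ[K] B0 →ₗ[K] B0) (n01 : B0 →ₗ[K] B1 →ₗ[K] B1)
    (n10 : B1 →ₗ[K] B0 →ₗ[K] B1)
    (ρ00 : A0 →ₗ[K] B0 →ₗ[K] B0) (ρ01 : A0 →ₗ[K] B1 →ₗ[K] B1) (ρ1 : A1 →ₗ[K] B0 →ₗ[K] B1)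
    (μ00 : A0 →ₗ[K] B0 →ₗ[K] B0) (μ01 : A0 →ₗ[K] B1 →ₗ[K] B1) (μ1 : A1 →ₗ[K] B0 →ₗ[K] B1)
    (ρ00' : B0 →ₗ[K] A0 →ₗ[K] A0) (ρ01' : B0 →ₗ[K] A1 →ₗ[K] A1) (ρ1' : B1 →ₗ[K] A0 →ₗ[K] A1)
    (μ00' : B0 →ₗ[K] A0 →ₗ[K] A0) (μ01' : B0 →ₗ[K] A1 →ₗ[K] A1) (μ1' : B1 →ₗ[K] A0 →ₗ[K] A1)
    (hmp : IsMatchedPairPreLie2 K (⇑d) (fun x y => m00 x y) (fun x a => m01 x a)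
      (fun a x => m10 a x) (⇑d') (fun x y => n00 x y) (fun x a => n01 x a)
      (fun a x => n10 a x)
      (fun x u => ρ00 x u) (fun x m => ρ01 x m) (fun a u => ρ1 a u)
      (fun x u => μ00 x u) (fun x m => μ01 x m) (fun a u => μ1 a u)
      (fun u x => ρ00' u x) (fun u a => ρ01' u a) (fun m x => ρ1' m x)
      (fun u x => μ00' u x) (fun u a => μ01' u a) (fun m x => μ1' m x)) :
    IsStrictPreLie2 K
      (fun p : A1 × B1 => ((d p.1, d' p.2) : A0 × B0))
      (fun p q : A0 × B0 =>
        ((m00 p.1 q.1 + μ00' q.2 p.1 + ρ00' p.2 q.1,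
          n00 p.2 q.2 + ρ00 p.1 q.2 + μ00 q.1 p.2) : A0 × B0))
      (fun (p : A0 × B0) (q : A1 × B1) =>
        ((m01 p.1 q.1 + μ1' q.2 p.1 + ρ01' p.2 q.1,
          n01 p.2 q.2 + ρ01 p.1 q.2 + μ1 q.1 p.2) : A1 × B1))
      (fun (p : A1 × B1) (q : A0 × B0) =>
        ((m10 p.1 q.1 + μ01' q.2 p.1 + ρ1' p.2 q.1,
          n10 p.2 q.2 + ρ1 p.1 q.2 + μ01 q.1 p.2) : A1 × B1)) :=
  ⟨(d.prodMap d').isLinear, isBilin_matchedMul .., isBilin_matchedMul .., isBilin_matchedMul ..,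
    hmp.sum_d_m01, hmp.sum_d_m10, hmp.sum_d_mix, hmp.sum_preLie0, hmp.sum_preLie1,
    hmp.sum_preLie2⟩

/-- a matched pair of strict pre-Lie 2-algebras gives a strict pre-Lie
2-algebra structure on the direct sum. -/
theorem matched_pair_preLie2_gives_sum_preLie2
    {K : Type*} [Field K] [CharZero K]
    {A0 A1 B0 B1 : Type*} [AddCommGroup A0] [Module K A0] [FiniteDimensional K A0]
    [AddCommGroup A1] [Module K A1] [FiniteDimensional K A1]
    [AddCommGroup B0] [Module K B0] [FiniteDimensional K B0]
    [AddCommGroup B1] [Module K B1] [FiniteDimensional K B1]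
    (d : A1 →ₗ[K] A0) (m00 : A0 →ₗ[K] A0 →ₗ[K] A0) (m01 : A0 →ₗ[K] A1 →ₗ[K] A1)
    (m10 : A1 →ₗ[K] A0 →ₗ[K] A1)
    (d' : B1 →ₗ[K] B0) (n00 : B0 →ₗ[K] B0 →ₗ[K] B0) (n01 : B0 →ₗ[K] B1 →ₗ[K] B1)
    (n10 : B1 →ₗ[K] B0 →ₗ[K] B1)
    (ρ00 : A0 →ₗ[K] B0 →ₗ[K] B0) (ρ01 : A0 →ₗ[K] B1 →ₗ[K] B1) (ρ1 : A1 →ₗ[K] B0 →ₗ[K] B1)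
    (μ00 : A0 →ₗ[K] B0 →ₗ[K] B0) (μ01 : A0 →ₗ[K] B1 →ₗ[K] B1) (μ1 : A1 →ₗ[K] B0 →ₗ[K] B1)
    (ρ00' : B0 →ₗ[K] A0 →ₗ[K] A0) (ρ01' : B0 →ₗ[K] A1 →ₗ[K] A1) (ρ1' : B1 →ₗ[K] A0 →ₗ[K] A1)
    (μ00' : B0 →ₗ[K] A0 →ₗ[K] A0) (μ01' : B0 →ₗ[K] A1 →ₗ[K] A1) (μ1' : B1 →ₗ[K] A0 →ₗ[K] A1)
    (hmp : IsMatchedPairPreLie2 K (⇑d) (fun x y => m00 x y) (fun x a => m01 x a)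
      (fun a x => m10 a x) (⇑d') (fun x y => n00 x y) (fun x a => n01 x a)
      (fun a x => n10 a x)
      (fun x u => ρ00 x u) (fun x m => ρ01 x m) (fun a u => ρ1 a u)
      (fun x u => μ00 x u) (fun x m => μ01 x m) (fun a u => μ1 a u)
      (fun u x => ρ00' u x) (fun u a => ρ01' u a) (fun m x => ρ1' m x)
      (fun u x => μ00' u x) (fun u a => μ01' u a) (fun m x => μ1' m x)) :
    IsStrictPreLie2 K
      (fun p : A1 × B1 => ((d p.1, d' p.2) : A0 × B0))
      (fun p q : A0 × B0 =>
        ((m00 p.1 q.1 + μ00' q.2 p.1 + ρ00' p.2 q.1,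
          n00 p.2 q.2 + ρ00 p.1 q.2 + μ00 q.1 p.2) : A0 × B0))
      (fun (p : A0 × B0) (q : A1 × B1) =>
        ((m01 p.1 q.1 + μ1' q.2 p.1 + ρ01' p.2 q.1,
          n01 p.2 q.2 + ρ01 p.1 q.2 + μ1 q.1 p.2) : A1 × B1))
      (fun (p : A1 × B1) (q : A0 × B0) =>
        ((m10 p.1 q.1 + μ01' q.2 p.1 + ρ1' p.2 q.1,
          n10 p.2 q.2 + ρ1 p.1 q.2 + μ01 q.1 p.2) : A1 × B1)) :=
  matched_pair_preLie2_gives_sum_preLie2_general d m00 m01 m10 d' n00 n01 n10 ρ00 ρ01 ρ1 μ00 μ01 μ1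
    ρ00' ρ01' ρ1' μ00' μ01' μ1' hmp
end
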